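/- Let G be a connected graph with a maximal subtree T, and let p₀ be a fixed vertex. In the maximal fundamental C*-algebra of a graph of C*-algebras with respect to T, the linear span of A_{p₀} together with all elements of the form a₀ u_{e₁} ⋯ u_{eₙ} aₙ, where (e₁,…,eₙ) is a path in G from p₀ to p₀, a₀ ∈ A_{p₀} and aᵢ ∈ A_{r(eᵢ)}, is a dense *-subalgebra. -/

import Mathlib

/-! Graphs in the sense of Serre. -/
structure SerreGraph where
  V : Type
  E : Type
  src : E → V
  bar : E → E
  bar_bar : ∀ e, bar (bar e) = e
  bar_ne : ∀ e, bar e ≠ e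

namespace SerreGraph
variable (G : SerreGraph)

/-- The range (target) of an edge. -/
def rng (e : G.E) : G.V := G.src (G.bar e)

/-- `IsPath p l q` : the list of edges `l` is a path from `p` to `q`. -/
inductive IsPath : G.V → List G.E → G.V → Prop
  | nil (p : G.V) : IsPath p [] p
  | cons {q : G.V} (e : G.E) {l : List G.E} (h : IsPath (G.rng e) l q) :
      IsPath (G.src e) (e :: l) q

def Connected : Prop := ∀ p q : G.V, ∃ l, G.IsPath p l q

/-- A path without backtracking. -/
def NoBacktrack (l : List G.E) : Prop := l.Chain' fun e f => f ≠ G.bar e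

/-- `T` (a set of edges, closed under reversal) is a maximal subtree of `G`:
between any two vertices there is a unique geodesic (non-backtracking) path with
all edges in `T`. -/
structure IsMaximalSubtree (T : Set G.E) : Prop where
  bar_mem : ∀ e ∈ T, G.bar e ∈ T
  geodesic : ∀ p q : G.V, ∃! l : List G.E,
    G.IsPath p l q ∧ (∀ e ∈ l, e ∈ T) ∧ G.NoBacktrack l

end SerreGraph

/-- The element `a₀ u_{e₁} a₁ ⋯ u_{eₙ} aₙ` of `P` associated to a vertex `p₀`, a
coefficient `a₀ ∈ A_{p₀}` and a list of pairs `(eᵢ, aᵢ)` with `aᵢ ∈ A_{r(eᵢ)}`. -/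
noncomputable def pathWord {G : SerreGraph} (A : G.V → Type) [∀ q, CStarAlgebra (A q)]
    {P : Type} [CStarAlgebra P] (ι : ∀ q, A q →⋆ₐ[ℂ] P) (u : G.E → P)
    (p₀ : G.V) (a₀ : A p₀) (l : List (Σ e : G.E, A (G.rng e))) : P :=
  ι p₀ a₀ * (l.map fun x => u x.1 * ι (G.rng x.1) x.2).prod

/-! Left multiplication by a generator preserves the set `W` of loop words at `p₀`: a vertex
element `ι q a` or a unitary `u e` can be reached from `p₀` and brought back along paths in the
maximal subtree, on which all `u` are trivial. Hence `W` is the monoid generated by the `ι q a`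
and `u e`. Since `u ē = (u e)*`, this generating set is closed under `star`, so the span of `W`
is the star subalgebra it generates, which is dense by assumption. -/

namespace SerreGraph

variable {G : SerreGraph}

lemma IsMaximalSubtree.exists_isPath_prod_eq_one {M : Type*} [Monoid M] {T : Set G.E}
    (hT : G.IsMaximalSubtree T) {u : G.E → M} (hu : ∀ e ∈ T, u e = 1) (p q : G.V) :
    ∃ l, G.IsPath p l q ∧ (l.map u).prod = 1 := by
  obtain ⟨l, ⟨hl, hlT, -⟩, -⟩ := hT.geodesic p q
  exact ⟨l, hl, List.prod_eq_one fun x hx => by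
    obtain ⟨e, he, rfl⟩ := List.mem_map.mp hx
    exact hu e (hlT e he)⟩

end SerreGraph

namespace FundamentalCStarAlgebra

open SerreGraph

variable {G : SerreGraph} {A : G.V → Type} [∀ q, CStarAlgebra (A q)]
  {P : Type} [CStarAlgebra P] (ι : ∀ q, A q →⋆ₐ[ℂ] P) (u : G.E → P)

def generators : Set P := {x : P | ∃ q a, x = ι q a} ∪ {x : P | ∃ e, x = u e}

def pathWords (p q : G.V) : Set P :=
  {x : P | ∃ (a₀ : A p) (l : List (Σ e : G.E, A (G.rng e))),
    G.IsPath p (l.map Sigma.fst) q ∧ x = pathWord A ι u p a₀ l}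

variable {ι u}

lemma one_mem_pathWords (p : G.V) : (1 : P) ∈ pathWords ι u p p :=
  ⟨1, [], IsPath.nil p, by simp [pathWord]⟩

lemma vertex_mul_mem_pathWords {p q : G.V} (c : A p) {x : P} (hx : x ∈ pathWords ι u p q) :
    ι p c * x ∈ pathWords ι u p q := by
  obtain ⟨a₀, l, hl, rfl⟩ := hx
  exact ⟨c * a₀, l, hl, by simp [pathWord, mul_assoc]⟩

lemma edge_mul_mem_pathWords (e : G.E) {q : G.V} {x : P}
    (hx : x ∈ pathWords ι u (G.rng e) q) : u e * x ∈ pathWords ι u (G.src e) q := by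
  obtain ⟨a₀, l, hl, rfl⟩ := hx
  exact ⟨1, ⟨e, a₀⟩ :: l, IsPath.cons e hl, by simp [pathWord, mul_assoc]⟩

lemma prod_mul_mem_pathWords {p r q : G.V} {l : List G.E} (hl : G.IsPath p l r) {x : P}
    (hx : x ∈ pathWords ι u r q) : (l.map u).prod * x ∈ pathWords ι u p q := by
  induction hl with
  | nil => simpa using hx
  | cons e _ ih =>
    rw [List.map_cons, List.prod_cons, mul_assoc]
    exact edge_mul_mem_pathWords e (ih hx)

lemma pathWords_subset_closure (p q : G.V) :
    pathWords ι u p q ⊆ Submonoid.closure (generators ι u) := by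
  rintro _ ⟨a₀, l, -, rfl⟩
  have hι : ∀ q a, ι q a ∈ Submonoid.closure (generators ι u) :=
    fun q a => Submonoid.subset_closure (Or.inl ⟨q, a, rfl⟩)
  refine mul_mem (hι p a₀) (list_prod_mem fun x hx => ?_)
  obtain ⟨⟨e, a⟩, -, rfl⟩ := List.mem_map.mp hx
  exact mul_mem (Submonoid.subset_closure (Or.inr ⟨e, rfl⟩)) (hι _ a)

lemma mul_mem_pathWords_of_isMaximalSubtree {T : Set G.E} (hT : G.IsMaximalSubtree T)
    (hu_tree : ∀ e ∈ T, u e = 1) {p₀ q r : G.V} {g : P}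
    (hg : ∀ y ∈ pathWords ι u r p₀, g * y ∈ pathWords ι u q p₀) {y : P}
    (hy : y ∈ pathWords ι u p₀ p₀) : g * y ∈ pathWords ι u p₀ p₀ := by
  obtain ⟨l₁, hl₁, h₁⟩ := hT.exists_isPath_prod_eq_one hu_tree p₀ q
  obtain ⟨l₂, hl₂, h₂⟩ := hT.exists_isPath_prod_eq_one hu_tree r p₀
  simpa [h₁, h₂] using prod_mul_mem_pathWords hl₁ (hg _ (prod_mul_mem_pathWords hl₂ hy))

lemma closure_subset_pathWords {T : Set G.E} (hT : G.IsMaximalSubtree T)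
    (hu_tree : ∀ e ∈ T, u e = 1) (p₀ : G.V) :
    (Submonoid.closure (generators ι u) : Set P) ⊆ pathWords ι u p₀ p₀ := by
  intro x hx
  induction hx using Submonoid.closure_induction_left with
  | one => exact one_mem_pathWords p₀
  | mul_left g hg y _ hy =>
    rcases hg with ⟨q, a, rfl⟩ | ⟨e, rfl⟩
    · exact mul_mem_pathWords_of_isMaximalSubtree hT hu_tree
        (fun _ => vertex_mul_mem_pathWords a) hy
    · exact mul_mem_pathWords_of_isMaximalSubtree hT hu_tree
        (fun _ => edge_mul_mem_pathWords e) hy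

lemma star_generators_subset (hu_star : ∀ e, u (G.bar e) = star (u e)) :
    star (generators ι u) ⊆ generators ι u := by
  rintro _ (⟨q, a, hx⟩ | ⟨e, hx⟩)
  · exact Or.inl ⟨q, star a, by rw [map_star, ← hx, star_star]⟩
  · exact Or.inr ⟨G.bar e, by rw [hu_star, ← hx, star_star]⟩

end FundamentalCStarAlgebra

section

variable {R A : Type*} [CommSemiring R] [StarRing R] [Semiring A] [Algebra R A] [StarRing A]
  [StarModule R A]

theorem StarAlgebra.adjoin_toSubalgebra_of_star_subset {s : Set A} (hs : star s ⊆ s) :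
    (StarAlgebra.adjoin R s).toSubalgebra = Algebra.adjoin R s := by
  rw [StarAlgebra.adjoin_toSubalgebra, Set.union_eq_left.mpr hs]

theorem dense_starSubalgebra_span_of_eq_closure [TopologicalSpace A]
    [IsSemitopologicalSemiring A] [ContinuousStar A] {s W : Set A} (hW : W = Submonoid.closure s)
    (hs : star s ⊆ s) (hdense : (StarAlgebra.adjoin R s).topologicalClosure = ⊤) :
    Dense (↑(Submodule.span R W) : Set A) ∧
      (∀ x ∈ Submodule.span R W, star x ∈ Submodule.span R W) ∧
      (∀ x ∈ Submodule.span R W, ∀ y ∈ Submodule.span R W, x * y ∈ Submodule.span R W) ∧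
      (1 : A) ∈ Submodule.span R W := by
  have hspan : (Submodule.span R W : Set A) = StarAlgebra.adjoin R s := by
    rw [hW, ← Algebra.adjoin_eq_span, ← StarAlgebra.adjoin_toSubalgebra_of_star_subset hs]
    rfl
  have hmem : ∀ x, x ∈ Submodule.span R W ↔ x ∈ StarAlgebra.adjoin R s := fun x => by
    rw [← SetLike.mem_coe, hspan, SetLike.mem_coe]
  simp only [hmem, hspan]
  refine ⟨?_, fun x hx => star_mem hx, fun x hx y hy => mul_mem hx hy, one_mem _⟩
  rw [dense_iff_closure_eq, ← StarSubalgebra.topologicalClosure_coe, hdense]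
  rfl

end

open FundamentalCStarAlgebra in
theorem stmt0_general (G : SerreGraph)
    (A : G.V → Type) [∀ q, CStarAlgebra (A q)]
    (T : Set G.E) (hT : G.IsMaximalSubtree T)
    (P : Type) [CStarAlgebra P]
    (ι : ∀ q, A q →⋆ₐ[ℂ] P) (u : G.E → P)
    (hu_star : ∀ e, u (G.bar e) = star (u e))
    (hu_tree : ∀ e ∈ T, u e = 1)
    (hgen : (StarAlgebra.adjoin ℂ
        ({x : P | ∃ q a, x = ι q a} ∪ {x : P | ∃ e, x = u e})).topologicalClosure = ⊤)
    (p₀ : G.V) :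
    letI W : Set P := {x : P | ∃ (a₀ : A p₀) (l : List (Σ e : G.E, A (G.rng e))),
      G.IsPath p₀ (l.map Sigma.fst) p₀ ∧ x = pathWord A ι u p₀ a₀ l}
    Dense (↑(Submodule.span ℂ W) : Set P) ∧
      (∀ x ∈ Submodule.span ℂ W, star x ∈ Submodule.span ℂ W) ∧
      (∀ x ∈ Submodule.span ℂ W, ∀ y ∈ Submodule.span ℂ W,
        x * y ∈ Submodule.span ℂ W) ∧
      (1 : P) ∈ Submodule.span ℂ W :=
  dense_starSubalgebra_span_of_eq_closure
    ((pathWords_subset_closure p₀ p₀).antisymm (closure_subset_pathWords hT hu_tree p₀))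
    (star_generators_subset hu_star) hgen

/-- In the maximal fundamental C*-algebra of a graph of C*-algebras
(a C*-algebra `P` generated by the vertex algebras `A_q` and unitaries `u_e`
satisfying the defining relations, with `u_e = 1` on a maximal subtree `T`),
the linear span of `A_{p₀}` and of the elements `a₀ u_{e₁} a₁ ⋯ u_{eₙ} aₙ`
indexed by loops at `p₀` is a dense *-subalgebra. -/
theorem stmt0 (G : SerreGraph) (hconn : G.Connected)
    (A : G.V → Type) [∀ q, CStarAlgebra (A q)]
    (B : G.E → Type) [∀ e, CStarAlgebra (B e)]
    (σ : ∀ e, B e ≃⋆ₐ[ℂ] B (G.bar e))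
    (s : ∀ e, B e →⋆ₐ[ℂ] A (G.src e))
    (hs : ∀ e, Function.Injective (s e))
    (T : Set G.E) (hT : G.IsMaximalSubtree T)
    (P : Type) [CStarAlgebra P]
    (ι : ∀ q, A q →⋆ₐ[ℂ] P) (u : G.E → P)
    (hu_unitary : ∀ e, u e ∈ unitary P)
    (hu_star : ∀ e, u (G.bar e) = star (u e))
    (hu_rel : ∀ e (b : B e),
      star (u e) * ι (G.src e) (s e b) * u e = ι (G.rng e) (s (G.bar e) (σ e b)))
    (hu_tree : ∀ e ∈ T, u e = 1)
    (hgen : (StarAlgebra.adjoin ℂ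
        ({x : P | ∃ q a, x = ι q a} ∪ {x : P | ∃ e, x = u e})).topologicalClosure = ⊤)
    (p₀ : G.V) :
    letI W : Set P := {x : P | ∃ (a₀ : A p₀) (l : List (Σ e : G.E, A (G.rng e))),
      G.IsPath p₀ (l.map Sigma.fst) p₀ ∧ x = pathWord A ι u p₀ a₀ l}
    Dense (↑(Submodule.span ℂ W) : Set P) ∧
      (∀ x ∈ Submodule.span ℂ W, star x ∈ Submodule.span ℂ W) ∧
      (∀ x ∈ Submodule.span ℂ W, ∀ y ∈ Submodule.span ℂ W,
        x * y ∈ Submodule.span ℂ W) ∧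
      (1 : P) ∈ Submodule.span ℂ W :=
  stmt0_general G A T hT P ι u hu_star hu_tree hgen p₀
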